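/- arXiv:1909.03381 — 2 statements merged into one kernel-verified Lean document; each statement's English description precedes it below -/
import Mathlib

section
/- For integers n, p, q with p + q + 2 <= n and p >= q >= 2, the minimum status of the dumbbell D_n(p,q) is strictly greater than the minimum status of D_n(p+1, q-1). -/
open SimpleGraph

variable {V : Type*}

/-- The status of a vertex: sum of distances to all other vertices. -/
noncomputable def status [Fintype V] (G : SimpleGraph V) (u : V) : ℕ :=
  ∑ v : V, G.dist u v

/-- The minimum status of a graph. -/
noncomputable def minStatus [Fintype V] (G : SimpleGraph V) : ℕ :=
  sInf (Set.range (status G))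

/-- The matching number: maximum cardinality of a matching. -/
noncomputable def matchingNumber (G : SimpleGraph V) : ℕ :=
  sSup {k | ∃ M : G.Subgraph, M.IsMatching ∧ M.edgeSet.ncard = k}

/-- The domination number: minimum cardinality of a dominating set. -/
noncomputable def domNumber (G : SimpleGraph V) : ℕ :=
  sInf {k | ∃ S : Set V, (∀ v ∉ S, ∃ u ∈ S, G.Adj u v) ∧ S.ncard = k}

/-- The dumbbell `D_n(p,q)`: a path on `n - p - q` vertices `0, …, n-p-q-1`,
with `p` pendant vertices attached to vertex `0` and `q` pendant vertices
attached to vertex `n-p-q-1`. -/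
def dumbbell (n p q : ℕ) : SimpleGraph (Fin n) :=
  SimpleGraph.fromRel (fun a b =>
    ((a : ℕ) + 1 = (b : ℕ) ∧ (b : ℕ) < n - p - q) ∨
    ((a : ℕ) = 0 ∧ n - p - q ≤ (b : ℕ) ∧ (b : ℕ) < n - q) ∨
    ((a : ℕ) = n - p - q - 1 ∧ n - q ≤ (b : ℕ)))

/-- The tree `A_{n,m}`: a star with center `0` and leaves `1, …, n-m`, with one
pendant vertex `n-m+i` attached to leaf `i` for each `i = 1, …, m-1`. -/
def treeA (n m : ℕ) : SimpleGraph (Fin n) :=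
  SimpleGraph.fromRel (fun a b =>
    ((a : ℕ) = 0 ∧ 1 ≤ (b : ℕ) ∧ (b : ℕ) ≤ n - m) ∨
    (1 ≤ (a : ℕ) ∧ (a : ℕ) ≤ m - 1 ∧ (b : ℕ) = n - m + (a : ℕ)))

/-- The caterpillar `C_n(p,q)`: a path on vertices `0, …, n-p-q-1`; pendant
vertex `n-p-q+j` is attached to path vertex `j` for `j = 0, …, p-1`, and pendant
vertex `n-q+j` is attached to path vertex `n-p-2q+j` for `j = 0, …, q-1`. -/
def caterpillar (n p q : ℕ) : SimpleGraph (Fin n) :=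
  SimpleGraph.fromRel (fun a b =>
    ((a : ℕ) + 1 = (b : ℕ) ∧ (b : ℕ) < n - p - q) ∨
    (n - p - q ≤ (b : ℕ) ∧ (b : ℕ) < n - q ∧ (a : ℕ) = (b : ℕ) - (n - p - q)) ∨
    (n - q ≤ (b : ℕ) ∧ (a : ℕ) = (b : ℕ) - p - q))

/-!
Folding `D_n(p,q)` onto a path, with the left pendants at `0`, spine vertex `j` at `j + 1` and
the right pendants at `m + 1` (`m = n - p - q`), does not increase distances and preserves those
from spine vertices; hence spine vertex `i` has status `∑_{k<m} |i - k| + p (i + 1) + q (m - i)`.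
A pendant vertex has larger status than its neighbour, so `s(D_n(p,q))` is attained at some spine
vertex `i`. After moving a right pendant to the left end, spine vertex `i - 1` has status smaller
by `p - q + 1` than `i` had, or, if `i = 0`, vertex `0` has status smaller by `m - 1`.
-/

open SimpleGraph Finset

namespace SimpleGraph

variable {G : SimpleGraph V} {u v w : V}

lemma Walk.natDist_le_length {f : V → ℕ} (hf : ∀ a b, G.Adj a b → Nat.dist (f a) (f b) ≤ 1) :
    ∀ {u v : V} (p : G.Walk u v), Nat.dist (f u) (f v) ≤ p.length
  | _, _, .nil => by simp
  | u, v, .cons (v := x) h p => by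
    rw [Walk.length_cons]
    linarith [Nat.dist.triangle_inequality (f u) (f x) (f v), hf _ _ h, p.natDist_le_length hf]

lemma Reachable.natDist_le_dist {f : V → ℕ} (hf : ∀ a b, G.Adj a b → Nat.dist (f a) (f b) ≤ 1)
    (h : G.Reachable u v) : Nat.dist (f u) (f v) ≤ G.dist u v := by
  obtain ⟨p, hp⟩ := h.exists_walk_length_eq_dist
  exact hp ▸ p.natDist_le_length hf

lemma Connected.dist_lt_dist_of_neighborSet_eq_singleton (hconn : G.Connected)
    (hv : G.neighborSet v = {w}) {x : V} (hx : x ≠ v) : G.dist w x < G.dist v x := by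
  obtain ⟨p, hp⟩ := (hconn v x).exists_walk_length_eq_dist
  cases p with
  | nil => exact absurd rfl hx
  | cons h p =>
    obtain rfl : _ = w := by simpa [hv] using (show _ ∈ G.neighborSet v from h)
    rw [← hp, Walk.length_cons]
    exact Nat.lt_succ_of_le (dist_le p)

end SimpleGraph

section Status

variable [Fintype V] {G : SimpleGraph V}

lemma status_le_of_neighborSet_eq_singleton (hconn : G.Connected) {v w : V}
    (hv : G.neighborSet v = {w}) : status G w ≤ status G v := by
  classical
  unfold status
  rw [← Equiv.sum_comp (Equiv.swap v w)]
  refine sum_le_sum fun x _ => ?_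
  rcases eq_or_ne x v with rfl | hxv
  · simp
  rcases eq_or_ne x w with rfl | hxw
  · simp [dist_comm]
  · rw [Equiv.swap_apply_of_ne_of_ne hxv hxw]
    exact (hconn.dist_lt_dist_of_neighborSet_eq_singleton hv hxv).le

lemma minStatus_le_status (G : SimpleGraph V) (v : V) : minStatus G ≤ status G v :=
  Nat.sInf_le ⟨v, rfl⟩

lemma exists_status_eq_minStatus [Nonempty V] (G : SimpleGraph V) :
    ∃ v, status G v = minStatus G :=
  Nat.sInf_mem (Set.range_nonempty _)

end Status

lemma sum_range_natDist_succ_add {j m : ℕ} (hj : j < m) :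
    ∑ k ∈ range m, Nat.dist (j + 1) k + (m - (j + 1)) = ∑ k ∈ range m, Nat.dist j k + (j + 1) := by
  have hj' : j + 1 ≤ m := hj
  rw [← sum_range_add_sum_Ico _ hj', ← sum_range_add_sum_Ico _ hj']
  have hleft : ∑ k ∈ range (j + 1), Nat.dist (j + 1) k
      = ∑ k ∈ range (j + 1), (Nat.dist j k + 1) :=
    sum_congr rfl fun k hk => by simp only [mem_range] at hk; unfold Nat.dist; omega
  have hright : ∑ k ∈ Ico (j + 1) m, (Nat.dist (j + 1) k + 1) = ∑ k ∈ Ico (j + 1) m, Nat.dist j k :=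
    sum_congr rfl fun k hk => by simp only [mem_Ico] at hk; unfold Nat.dist; omega
  rw [sum_add_distrib, sum_const, card_range, smul_eq_mul, mul_one] at hleft
  rw [sum_add_distrib, sum_const, Nat.card_Ico, smul_eq_mul, mul_one] at hright
  omega

def spineStatus (m p q i : ℕ) : ℕ :=
  ∑ k ∈ range m, Nat.dist i k + p * (i + 1) + q * (m - i)

lemma spineStatus_transfer_zero_lt {m p q : ℕ} (hm : 2 ≤ m) (hq : 1 ≤ q) :
    spineStatus m (p + 1) (q - 1) 0 < spineStatus m p q 0 := by
  obtain ⟨r, rfl⟩ : ∃ r, q = r + 1 := ⟨q - 1, by omega⟩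
  simp only [spineStatus, Nat.add_sub_cancel, Nat.sub_zero]
  linarith

lemma spineStatus_transfer_lt_succ {m p q j : ℕ} (hpq : q ≤ p) (hq : 1 ≤ q) (hj : j + 1 < m) :
    spineStatus m (p + 1) (q - 1) j < spineStatus m p q (j + 1) := by
  obtain ⟨r, rfl⟩ : ∃ r, q = r + 1 := ⟨q - 1, by omega⟩
  obtain ⟨t, ht⟩ : ∃ t, m - (j + 1) = t + 1 := ⟨m - (j + 2), by omega⟩
  have hmj : m - j = t + 2 := by omega
  have hshift := sum_range_natDist_succ_add (m := m) (j := j) (by omega)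
  rw [ht] at hshift
  simp only [spineStatus, Nat.add_sub_cancel, ht, hmj]
  linarith

lemma exists_spineStatus_transfer_lt {m p q i : ℕ} (hm : 2 ≤ m) (hpq : q ≤ p) (hq : 1 ≤ q)
    (hi : i < m) : ∃ u < m, spineStatus m (p + 1) (q - 1) u < spineStatus m p q i := by
  cases i with
  | zero => exact ⟨0, by omega, spineStatus_transfer_zero_lt hm hq⟩
  | succ j => exact ⟨j, by omega, spineStatus_transfer_lt_succ hpq hq hi⟩

def dumbbellLevel (n p q j : ℕ) : ℕ :=
  if j < n - p - q then j + 1 else if j < n - q then 0 else n - p - q + 1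

section Dumbbell

variable {n p q : ℕ}

lemma natDist_dumbbellLevel_le_one {a b : Fin n} (hab : (dumbbell n p q).Adj a b) :
    Nat.dist (dumbbellLevel n p q a) (dumbbellLevel n p q b) ≤ 1 := by
  rw [dumbbell, fromRel_adj] at hab
  unfold dumbbellLevel Nat.dist
  split_ifs <;> omega

lemma dumbbell_exists_spine_walk (i : Fin n) {j : ℕ} (hij : (i : ℕ) ≤ j) (hj : j < n - p - q) :
    ∃ w : (dumbbell n p q).Walk i ⟨j, by omega⟩, w.length = j - i := by
  induction j, hij using Nat.le_induction with
  | base => exact ⟨.nil, by simp⟩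
  | succ j hij ih =>
    obtain ⟨w, hw⟩ := ih (by omega)
    have hadj : (dumbbell n p q).Adj ⟨j, by omega⟩ ⟨j + 1, hj.trans_le (by omega)⟩ := by
      rw [dumbbell, fromRel_adj]
      simp only [ne_eq, Fin.ext_iff, true_and]
      omega
    exact ⟨w.concat hadj, by simp only [Walk.length_concat, hw]; omega⟩

lemma dumbbell_exists_walk_length_le {u : Fin n} (hu : (u : ℕ) < n - p - q)
    (v : Fin n) : ∃ w : (dumbbell n p q).Walk u v,
      w.length ≤ Nat.dist (dumbbellLevel n p q u) (dumbbellLevel n p q v) := by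
  have hlu : dumbbellLevel n p q u = u + 1 := if_pos hu
  rcases lt_or_ge (v : ℕ) (n - p - q) with hv | hv
  · have hlv : dumbbellLevel n p q v = v + 1 := if_pos hv
    rw [hlu, hlv, Nat.dist_succ_succ]
    rcases le_total (u : ℕ) v with huv | hvu
    · obtain ⟨w, hw⟩ := dumbbell_exists_spine_walk u huv hv
      exact ⟨w, by rw [hw]; unfold Nat.dist; omega⟩
    · obtain ⟨w, hw⟩ := dumbbell_exists_spine_walk v hvu hu
      exact ⟨w.reverse, by rw [Walk.length_reverse, hw]; unfold Nat.dist; omega⟩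
  rcases lt_or_ge (v : ℕ) (n - q) with hv' | hv'
  · have hlv : dumbbellLevel n p q v = 0 := by unfold dumbbellLevel; split_ifs <;> omega
    obtain ⟨w, hw⟩ := dumbbell_exists_spine_walk ⟨0, by omega⟩ (by simp) hu
    have hadj : (dumbbell n p q).Adj ⟨0, by omega⟩ v := by
      rw [dumbbell, fromRel_adj]
      simp only [ne_eq, Fin.ext_iff, true_and]
      omega
    exact ⟨w.reverse.concat hadj, by
      rw [Walk.length_concat, Walk.length_reverse, hw, hlu, hlv]; unfold Nat.dist; omega⟩
  · have hlv : dumbbellLevel n p q v = n - p - q + 1 := by unfold dumbbellLevel; split_ifs <;> omega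
    obtain ⟨w, hw⟩ := dumbbell_exists_spine_walk u (j := n - p - q - 1)
      (by omega) (by omega : n - p - q - 1 < n - p - q)
    have hadj : (dumbbell n p q).Adj ⟨n - p - q - 1, by omega⟩ v := by
      rw [dumbbell, fromRel_adj]
      simp only [ne_eq, Fin.ext_iff, true_and]
      omega
    exact ⟨w.concat hadj, by
      rw [Walk.length_concat, hw, hlu, hlv]; unfold Nat.dist; omega⟩

lemma dumbbell_dist_eq {u : Fin n} (hu : (u : ℕ) < n - p - q) (v : Fin n) :
    (dumbbell n p q).dist u v = Nat.dist (dumbbellLevel n p q u) (dumbbellLevel n p q v) := by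
  obtain ⟨w, hw⟩ := dumbbell_exists_walk_length_le hu v
  exact le_antisymm ((dist_le w).trans hw)
    (Reachable.natDist_le_dist (fun _ _ => natDist_dumbbellLevel_le_one) ⟨w⟩)

lemma dumbbell_connected (h : p + q < n) : (dumbbell n p q).Connected := by
  have : Nonempty (Fin n) := ⟨⟨0, by omega⟩⟩
  have hreach (v : Fin n) : (dumbbell n p q).Reachable ⟨0, by omega⟩ v :=
    ⟨(dumbbell_exists_walk_length_le (u := ⟨0, by omega⟩) (by simp; omega) v).choose⟩
  exact ⟨fun u v => (hreach u).symm.trans (hreach v)⟩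

lemma status_dumbbell {u : Fin n} (hu : (u : ℕ) < n - p - q) :
    status (dumbbell n p q) u = spineStatus (n - p - q) p q u := by
  have hlu : dumbbellLevel n p q u = u + 1 := if_pos hu
  simp only [status, dumbbell_dist_eq hu, hlu]
  rw [Fin.sum_univ_eq_sum_range (fun j => Nat.dist ((u : ℕ) + 1) (dumbbellLevel n p q j)) n,
    ← sum_range_add_sum_Ico _ (show n - q ≤ n by omega),
    ← sum_range_add_sum_Ico _ (show n - p - q ≤ n - q by omega)]
  have hspine : ∑ j ∈ range (n - p - q), Nat.dist ((u : ℕ) + 1) (dumbbellLevel n p q j)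
      = ∑ j ∈ range (n - p - q), Nat.dist u j :=
    sum_congr rfl fun j hj => by
      rw [mem_range] at hj
      unfold dumbbellLevel
      rw [if_pos hj, Nat.dist_succ_succ]
  have hleft : ∑ j ∈ Ico (n - p - q) (n - q), Nat.dist ((u : ℕ) + 1) (dumbbellLevel n p q j)
      = ∑ j ∈ Ico (n - p - q) (n - q), ((u : ℕ) + 1) :=
    sum_congr rfl fun j hj => by
      rw [mem_Ico] at hj
      unfold dumbbellLevel
      rw [if_neg (by omega), if_pos hj.2, Nat.dist_zero_right]
  have hright : ∑ j ∈ Ico (n - q) n, Nat.dist ((u : ℕ) + 1) (dumbbellLevel n p q j)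
      = ∑ j ∈ Ico (n - q) n, (n - p - q - (u : ℕ)) :=
    sum_congr rfl fun j hj => by
      rw [mem_Ico] at hj
      unfold dumbbellLevel
      rw [if_neg (by omega), if_neg (by omega)]
      unfold Nat.dist
      omega
  rw [hspine, hleft, hright, sum_const, sum_const, Nat.card_Ico, Nat.card_Ico, smul_eq_mul,
    smul_eq_mul, spineStatus, show n - q - (n - p - q) = p by omega, show n - (n - q) = q by omega]

lemma dumbbell_neighborSet_of_left (h : p + q < n) {v : Fin n} (hv : n - p - q ≤ (v : ℕ))
    (hv' : (v : ℕ) < n - q) : (dumbbell n p q).neighborSet v = {⟨0, by omega⟩} := by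
  ext x
  simp only [mem_neighborSet, dumbbell, fromRel_adj, Set.mem_singleton_iff, ne_eq, Fin.ext_iff]
  omega

lemma dumbbell_neighborSet_of_right (h : p + q < n) {v : Fin n} (hv : n - q ≤ (v : ℕ)) :
    (dumbbell n p q).neighborSet v = {⟨n - p - q - 1, by omega⟩} := by
  ext x
  simp only [mem_neighborSet, dumbbell, fromRel_adj, Set.mem_singleton_iff, ne_eq, Fin.ext_iff]
  omega

lemma exists_spine_status_le_minStatus (h : p + q < n) :
    ∃ u : Fin n, (u : ℕ) < n - p - q ∧ status (dumbbell n p q) u ≤ minStatus (dumbbell n p q) := by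
  have : Nonempty (Fin n) := ⟨⟨0, by omega⟩⟩
  obtain ⟨v, hv⟩ := exists_status_eq_minStatus (dumbbell n p q)
  have hconn := dumbbell_connected h
  rcases lt_or_ge (v : ℕ) (n - p - q) with hspine | hpendant
  · exact ⟨v, hspine, hv.le⟩
  rcases lt_or_ge (v : ℕ) (n - q) with hleft | hright
  · exact ⟨_, by dsimp only; omega, (status_le_of_neighborSet_eq_singleton hconn
      (dumbbell_neighborSet_of_left h hpendant hleft)).trans hv.le⟩
  · exact ⟨_, by dsimp only; omega, (status_le_of_neighborSet_eq_singleton hconn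
      (dumbbell_neighborSet_of_right h hright)).trans hv.le⟩

end Dumbbell

/-- `s(D_n(p,q)) > s(D_n(p+1,q-1))` when `p ≥ q ≥ 2` and `p + q + 2 ≤ n`. -/
theorem stmt4 (n p q : ℕ) (h1 : p + q + 2 ≤ n) (h2 : q ≤ p) (h3 : 2 ≤ q) :
    minStatus (dumbbell n (p + 1) (q - 1)) < minStatus (dumbbell n p q) := by
  have hspine : n - (p + 1) - (q - 1) = n - p - q := by omega
  obtain ⟨i, hi, hi_le⟩ := exists_spine_status_le_minStatus (by omega : p + q < n)
  obtain ⟨u, hu, hlt⟩ :=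
    exists_spineStatus_transfer_lt (m := n - p - q) (by omega) h2 (by omega) hi
  have hun : u < n := by omega
  calc minStatus (dumbbell n (p + 1) (q - 1))
      ≤ status (dumbbell n (p + 1) (q - 1)) ⟨u, hun⟩ := minStatus_le_status _ _
    _ = spineStatus (n - p - q) (p + 1) (q - 1) u := by
      rw [status_dumbbell (hu.trans_eq hspine.symm), hspine]
    _ < spineStatus (n - p - q) p q i := hlt
    _ = status (dumbbell n p q) i := (status_dumbbell hi).symm
    _ ≤ minStatus (dumbbell n p q) := hi_le
end

section
/- For integers n and gamma with 1 <= gamma < ceil(n/3), the minimum status of the dumbbell D_n(ceil((n - 3*gamma + 2)/2), floor((n - 3*gamma + 2)/2)) equals ((3*gamma - 1)/2) * (n - (3*gamma - 1)/2) if gamma is odd, and equals (3*gamma/2) * (n + 1 - 3*gamma/2) - ceil(n/2) if gamma is even. -/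
open SimpleGraph

variable {V : Type*}

/-!
Place the dumbbell on the integer line: path vertex `j` at `j`, the `p` pendant vertices of the
first path vertex at `-1`, and the `q` pendant vertices of the last one at `m`, where `m` is the
number of path vertices. Positions change by at most one along an edge, so every distance
dominates the difference of positions, with equality when one endpoint lies on the path. Hence
every status is at least a sum of absolute deviations of the positions, which is minimised at a
median of the positions, and the status of a path vertex is exactly such a sum. For `p - q ∈ {0, 1}`
the path vertex `⌊(m - 1)/2⌋` is a median, and its status evaluates to the two closed forms.
-/

open Finset

section Median

variable {ι α : Type*} [AddCommGroup α] [LinearOrder α] [IsOrderedAddMonoid α]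

lemma sum_abs_sub_le_sum_abs_sub_of_le {s : Finset ι} {a : ι → α} {x₀ x : α} (hx : x₀ ≤ x)
    (hgt : 2 * #{i ∈ s | x₀ < a i} ≤ #s) :
    ∑ i ∈ s, |x₀ - a i| ≤ ∑ i ∈ s, |x - a i| := by
  have hterm : ∀ i ∈ s, |x₀ - a i| + (if x₀ < a i then -(x - x₀) else x - x₀) ≤ |x - a i| := by
    intro i _
    split_ifs with hi
    · have := abs_sub_le x₀ x (a i)
      rw [abs_sub_comm x₀ x, abs_of_nonneg (sub_nonneg.2 hx)] at this
      rwa [← sub_eq_add_neg, sub_le_iff_le_add']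
    · have hax : a i ≤ x₀ := not_lt.1 hi
      rw [abs_of_nonneg (sub_nonneg.2 hax), abs_of_nonneg (sub_nonneg.2 (hax.trans hx))]
      exact le_of_eq (by abel)
  have hcount : #{i ∈ s | x₀ < a i} ≤ #{i ∈ s | ¬x₀ < a i} := by
    have := card_filter_add_card_filter_not (s := s) (fun i => x₀ < a i)
    omega
  calc ∑ i ∈ s, |x₀ - a i|
      ≤ ∑ i ∈ s, |x₀ - a i| + (#{i ∈ s | ¬x₀ < a i} • (x - x₀) - #{i ∈ s | x₀ < a i} • (x - x₀)) :=
        le_add_of_nonneg_right (sub_nonneg.2 (nsmul_le_nsmul_left (sub_nonneg.2 hx) hcount))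
    _ = ∑ i ∈ s, (|x₀ - a i| + if x₀ < a i then -(x - x₀) else x - x₀) := by
        rw [sum_add_distrib, sum_ite, sum_const, sum_const, smul_neg]
        abel
    _ ≤ ∑ i ∈ s, |x - a i| := sum_le_sum hterm

theorem sum_abs_sub_le_sum_abs_sub_of_median {s : Finset ι} {a : ι → α} {x₀ : α}
    (hlt : 2 * #{i ∈ s | a i < x₀} ≤ #s) (hgt : 2 * #{i ∈ s | x₀ < a i} ≤ #s) (x : α) :
    ∑ i ∈ s, |x₀ - a i| ≤ ∑ i ∈ s, |x - a i| := by
  rcases le_total x₀ x with hx | hx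
  · exact sum_abs_sub_le_sum_abs_sub_of_le hx hgt
  · have := sum_abs_sub_le_sum_abs_sub_of_le (a := fun i => -a i) (neg_le_neg hx)
      (by simpa only [neg_lt_neg_iff] using hlt)
    simpa only [neg_sub_neg, abs_sub_comm] using this

end Median

namespace SimpleGraph

variable {G : SimpleGraph V}

lemma Walk.abs_sub_le_length (c : V → ℤ) (hc : ∀ a b, G.Adj a b → |c a - c b| ≤ 1)
    {u v : V} (W : G.Walk u v) : |c u - c v| ≤ W.length := by
  induction W with
  | nil => simp
  | @cons u v w h W ih =>
    calc |c u - c w| ≤ |c u - c v| + |c v - c w| := abs_sub_le _ _ _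
      _ ≤ 1 + W.length := add_le_add (hc _ _ h) ih
      _ = (W.cons h).length := by rw [Walk.length_cons]; push_cast; ring

lemma Reachable.abs_sub_le_dist (c : V → ℤ) (hc : ∀ a b, G.Adj a b → |c a - c b| ≤ 1)
    {u v : V} (h : G.Reachable u v) : |c u - c v| ≤ G.dist u v := by
  obtain ⟨W, hW⟩ := h.exists_walk_length_eq_dist
  exact hW ▸ W.abs_sub_le_length c hc

end SimpleGraph

lemma minStatus_eq_status_of_forall_le [Fintype V] {G : SimpleGraph V} {u : V}
    (h : ∀ v, status G u ≤ status G v) : minStatus G = status G u :=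
  le_antisymm (Nat.sInf_le ⟨u, rfl⟩) (le_csInf ⟨_, u, rfl⟩ (by rintro _ ⟨v, rfl⟩; exact h v))

lemma two_mul_sum_range_abs_sub {s m : ℕ} (h : s ≤ m) :
    2 * ∑ j ∈ range m, |(s : ℤ) - j| = s * (s + 1) + (m - s) * (m - s - 1) := by
  induction m generalizing s with
  | zero => simp [Nat.le_zero.1 h]
  | succ m ih =>
    rw [sum_range_succ]
    rcases h.lt_or_eq with h | rfl
    · rw [mul_add, ih (by omega), abs_of_nonpos (by omega)]
      push_cast
      ring
    · have shift : ∀ j ∈ range m, |((m + 1 : ℕ) : ℤ) - j| = |(m : ℤ) - j| + 1 := fun j hj => by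
        rw [abs_of_pos (by simp at hj; omega), abs_of_pos (by simp at hj; omega)]
        push_cast
        ring
      rw [sum_congr rfl shift, sum_add_distrib, mul_add, mul_add, ih le_rfl]
      simp only [sub_self, zero_sub, mul_neg, mul_one, neg_zero, add_zero, sum_const, card_range,
        Int.nsmul_eq_mul, Nat.cast_add, Nat.cast_one, add_sub_cancel_left, abs_one]
      ring

def dumbbellCoord (m p : ℕ) (j : ℕ) : ℤ := if j < m then j else if j < m + p then -1 else m

section Dumbbell

variable {m p q : ℕ}

lemma dumbbell_adj_abs_coord_sub_le_one (a b : Fin (m + p + q))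
    (h : (dumbbell (m + p + q) p q).Adj a b) :
    |dumbbellCoord m p a - dumbbellCoord m p b| ≤ 1 := by
  rw [dumbbell, SimpleGraph.fromRel_adj] at h
  have := a.isLt
  have := b.isLt
  rw [abs_le]
  unfold dumbbellCoord
  split_ifs <;> omega

lemma dumbbell_adj_mk (hm : 0 < m) {i j : ℕ} (hi : i < m + p + q) (hj : j < m + p + q)
    (h : i + 1 = j ∧ j < m ∨ i = 0 ∧ m ≤ j ∧ j < m + p ∨ i + 1 = m ∧ m + p ≤ j) :
    (dumbbell (m + p + q) p q).Adj ⟨i, hi⟩ ⟨j, hj⟩ := by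
  rw [dumbbell, SimpleGraph.fromRel_adj]
  simp only [ne_eq, Fin.mk.injEq]
  omega

lemma dumbbell_exists_walk_length_eq_sub {i j : ℕ} (hij : i ≤ j) (hj : j < m) :
    ∃ W : (dumbbell (m + p + q) p q).Walk ⟨i, by omega⟩ ⟨j, by omega⟩, W.length = j - i := by
  induction j, hij using Nat.le_induction with
  | base => exact ⟨.nil, by simp⟩
  | succ j hij ih =>
    obtain ⟨W, hW⟩ := ih (by omega)
    exact ⟨W.concat (dumbbell_adj_mk (by omega) _ _ (by omega)),
      by rw [SimpleGraph.Walk.length_concat]; omega⟩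

lemma dumbbell_exists_walk_length_le_s14 {s : ℕ} (hs : s < m) (v : Fin (m + p + q)) :
    ∃ W : (dumbbell (m + p + q) p q).Walk ⟨s, by omega⟩ v,
      (W.length : ℤ) ≤ |s - dumbbellCoord m p v| := by
  obtain ⟨v, hv⟩ := v
  dsimp only [dumbbellCoord]
  split_ifs with h₁ h₂
  · rcases le_total s v with hsv | hvs
    · obtain ⟨W, hW⟩ := dumbbell_exists_walk_length_eq_sub (p := p) (q := q) hsv h₁
      exact ⟨W, le_abs.2 (Or.inr (by omega))⟩
    · obtain ⟨W, hW⟩ := dumbbell_exists_walk_length_eq_sub (p := p) (q := q) hvs hs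
      exact ⟨W.reverse, le_abs.2 (Or.inl (by rw [W.length_reverse]; omega))⟩
  · obtain ⟨W, hW⟩ := dumbbell_exists_walk_length_eq_sub (p := p) (q := q) (Nat.zero_le s) hs
    exact ⟨W.reverse.concat (dumbbell_adj_mk (by omega) _ _ (by omega)),
      le_abs.2 (Or.inl (by rw [W.reverse.length_concat, W.length_reverse]; omega))⟩
  · obtain ⟨W, hW⟩ := dumbbell_exists_walk_length_eq_sub (m := m) (p := p) (q := q)
      (i := s) (j := m - 1) (by omega) (by omega)
    exact ⟨W.concat (dumbbell_adj_mk (by omega) _ _ (by omega)),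
      le_abs.2 (Or.inr (by rw [W.length_concat]; omega))⟩

lemma dumbbell_dist_eq_abs {s : ℕ} (hs : s < m) (v : Fin (m + p + q)) :
    ((dumbbell (m + p + q) p q).dist ⟨s, by omega⟩ v : ℤ) = |s - dumbbellCoord m p v| := by
  obtain ⟨W, hW⟩ := dumbbell_exists_walk_length_le_s14 hs v
  refine le_antisymm ((Nat.cast_le.2 (SimpleGraph.dist_le W)).trans hW) ?_
  have := SimpleGraph.Reachable.abs_sub_le_dist (fun w : Fin (m + p + q) => dumbbellCoord m p w)
    dumbbell_adj_abs_coord_sub_le_one ⟨W⟩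
  rwa [show dumbbellCoord m p s = s from if_pos hs] at this

lemma dumbbell_connected_s14 (hm : 0 < m) : (dumbbell (m + p + q) p q).Connected := by
  refine (SimpleGraph.connected_iff_exists_forall_reachable _).2 ⟨⟨0, by omega⟩, fun v => ?_⟩
  obtain ⟨W, -⟩ := dumbbell_exists_walk_length_le_s14 hm v
  exact ⟨W⟩

lemma dumbbell_abs_coord_sub_le_dist (hm : 0 < m) (u v : Fin (m + p + q)) :
    |dumbbellCoord m p u - dumbbellCoord m p v| ≤ (dumbbell (m + p + q) p q).dist u v :=
  ((dumbbell_connected_s14 hm).preconnected u v).abs_sub_le_dist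
    (fun w : Fin (m + p + q) => dumbbellCoord m p w) dumbbell_adj_abs_coord_sub_le_one

lemma sum_dumbbellCoord {M : Type*} [AddCommMonoid M] (f : ℤ → M) :
    ∑ v : Fin (m + p + q), f (dumbbellCoord m p v) = ∑ j ∈ range m, f j + p • f (-1) + q • f m := by
  have path : ∀ j ∈ range m, f (dumbbellCoord m p j) = f j := fun j hj => by
    rw [dumbbellCoord, if_pos (mem_range.1 hj)]
  have left : ∀ k ∈ range p, f (dumbbellCoord m p (m + k)) = f (-1) := fun k hk => by
    rw [dumbbellCoord, if_neg (by omega), if_pos (by simp at hk; omega)]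
  have right : ∀ k ∈ range q, f (dumbbellCoord m p (m + p + k)) = f m := fun k _ => by
    rw [dumbbellCoord, if_neg (by omega), if_neg (by omega)]
  rw [Fin.sum_univ_eq_sum_range (fun j => f (dumbbellCoord m p j)), sum_range_add, sum_range_add,
    sum_congr rfl path, sum_congr rfl left, sum_congr rfl right, sum_const, sum_const,
    card_range, card_range]

lemma card_dumbbellCoord_lt {s : ℕ} (hs : s ≤ m) :
    #{v : Fin (m + p + q) | dumbbellCoord m p v < s} = p + s := by
  rw [card_filter, sum_dumbbellCoord (fun x : ℤ => if x < s then 1 else 0), ← card_filter]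
  have : (range m).filter (· < s) = range s := by ext; simp; omega
  simp only [Nat.cast_lt, this, card_range, smul_eq_mul, mul_ite, mul_one, mul_zero]
  split_ifs <;> omega

lemma card_lt_dumbbellCoord {s : ℕ} (hs : s < m) :
    #{v : Fin (m + p + q) | (s : ℤ) < dumbbellCoord m p v} = m - 1 - s + q := by
  rw [card_filter, sum_dumbbellCoord (fun x : ℤ => if (s : ℤ) < x then 1 else 0), ← card_filter]
  have : (range m).filter (s < ·) = Ioo s m := by ext; simp; omega
  simp only [Nat.cast_lt, this, Nat.card_Ioo, smul_eq_mul, mul_ite, mul_one, mul_zero]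
  split_ifs <;> omega

lemma dumbbell_status_eq_sum {s : ℕ} (hs : s < m) :
    (status (dumbbell (m + p + q) p q) ⟨s, by omega⟩ : ℤ)
      = ∑ v : Fin (m + p + q), |s - dumbbellCoord m p v| := by
  rw [status]
  push_cast
  exact sum_congr rfl fun v _ => dumbbell_dist_eq_abs hs v

lemma dumbbell_two_mul_status {s : ℕ} (hs : s < m) :
    2 * (status (dumbbell (m + p + q) p q) ⟨s, by omega⟩ : ℤ)
      = s * (s + 1) + (m - s) * (m - s - 1) + 2 * p * (s + 1) + 2 * q * (m - s) := by
  rw [dumbbell_status_eq_sum hs, sum_dumbbellCoord (fun x => |(s : ℤ) - x|), mul_add, mul_add,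
    two_mul_sum_range_abs_sub hs.le, abs_of_pos (by omega), abs_of_nonpos (by omega)]
  simp only [nsmul_eq_mul]
  ring

theorem dumbbell_minStatus_eq_status {s : ℕ} (hs : s < m) (hlt : 2 * (p + s) ≤ m + p + q)
    (hgt : 2 * (m - 1 - s + q) ≤ m + p + q) :
    minStatus (dumbbell (m + p + q) p q) = status (dumbbell (m + p + q) p q) ⟨s, by omega⟩ := by
  refine minStatus_eq_status_of_forall_le fun v => ?_
  have hmedian := sum_abs_sub_le_sum_abs_sub_of_median (s := univ)
    (a := fun w : Fin (m + p + q) => dumbbellCoord m p w) (x₀ := s)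
    (by rwa [card_dumbbellCoord_lt hs.le, card_univ, Fintype.card_fin])
    (by rwa [card_lt_dumbbellCoord hs, card_univ, Fintype.card_fin]) (dumbbellCoord m p v)
  zify
  calc (status (dumbbell (m + p + q) p q) ⟨s, _⟩ : ℤ)
      = ∑ w : Fin (m + p + q), |s - dumbbellCoord m p w| := dumbbell_status_eq_sum hs
    _ ≤ ∑ w : Fin (m + p + q), |dumbbellCoord m p v - dumbbellCoord m p w| := hmedian
    _ ≤ status (dumbbell (m + p + q) p q) v := by
      rw [status]
      push_cast
      exact sum_le_sum fun w _ => dumbbell_abs_coord_sub_le_dist (by omega) v w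

end Dumbbell

/-- The minimum status of `D_n(⌈(n-3γ+2)/2⌉, ⌊(n-3γ+2)/2⌋)` for `1 ≤ γ < ⌈n/3⌉`. -/
theorem stmt14 (n γ : ℕ) (h1 : 1 ≤ γ) (h2 : γ < (n + 2) / 3) :
    (Odd γ →
      minStatus (dumbbell n ((n - 3 * γ + 3) / 2) ((n - 3 * γ + 2) / 2))
        = ((3 * γ - 1) / 2) * (n - (3 * γ - 1) / 2)) ∧
    (Even γ →
      minStatus (dumbbell n ((n - 3 * γ + 3) / 2) ((n - 3 * γ + 2) / 2))
        = (3 * γ / 2) * (n + 1 - 3 * γ / 2) - (n + 1) / 2) := by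
  generalize hp : (n - 3 * γ + 3) / 2 = p
  generalize hq : (n - 3 * γ + 2) / 2 = q
  obtain ⟨m, rfl⟩ : ∃ m, n = m + p + q := ⟨3 * γ - 2, by omega⟩
  obtain ⟨s, hs⟩ : ∃ s, s = (3 * γ - 3) / 2 := ⟨_, rfl⟩
  have hsm : s < m := by omega
  have hstatus := dumbbell_two_mul_status (p := p) (q := q) hsm
  rw [dumbbell_minStatus_eq_status hsm (by omega) (by omega)]
  constructor
  · rintro ⟨t, rfl⟩
    obtain rfl : m = 2 * s + 1 := by omega
    rw [show (3 * (2 * t + 1) - 1) / 2 = s + 1 by omega]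
    zify [show s + 1 ≤ 2 * s + 1 + p + q by omega]
    refine mul_left_cancel₀ (two_ne_zero' ℤ) (hstatus.trans ?_)
    push_cast
    ring
  · rintro ⟨t, rfl⟩
    obtain rfl : m = 2 * s + 2 := by omega
    rw [show 3 * (t + t) / 2 = s + 2 by omega,
      show (2 * s + 2 + p + q + 1) / 2 = s + 1 + p by omega,
      show 2 * s + 2 + p + q + 1 - (s + 2) = s + 1 + p + q by omega]
    suffices h : (s + 2) * (s + 1 + p + q)
        = status (dumbbell (2 * s + 2 + p + q) p q) ⟨s, by omega⟩ + (s + 1 + p) by omega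
    zify
    refine mul_left_cancel₀ (two_ne_zero' ℤ) ?_
    rw [mul_add 2 (status _ _ : ℤ), hstatus]
    push_cast
    ring
end
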